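/- Let P and Q be probability measures on a standard Borel space and α ∈ (0,1). Then D_KL(P ‖ αP + (1−α)Q) = sup_{f ∈ F} [ ∫ f dP − α ∫ e^{f−1} dP − (1−α) ∫ e^{f−1} dQ ], where the supremum is over the set F of all bounded measurable real-valued functions, and for every such f the bracketed quantity is at most D_KL(P ‖ αP + (1−α)Q). -/

import Mathlib

open MeasureTheory Real

/-- The `α`-skew mixture `αP + (1-α)Q` of two measures. -/
noncomputable def mixture {Ω : Type*} [MeasurableSpace Ω] (α : ℝ) (P Q : Measure Ω) :
    Measure Ω :=
  ENNReal.ofReal α • P + ENNReal.ofReal (1 - α) • Q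

lemma nwj_pointwise (t v : ℝ) (ht : 0 ≤ t) :
    t * v - Real.exp (v - 1) ≤ t * Real.log t := by
  rcases eq_or_lt_of_le ht with h | h
  · simp [← h, neg_nonpos]
    positivity
  · have h1 : v - Real.log t ≤ Real.exp (v - 1 - Real.log t) := by
      have := Real.add_one_le_exp (v - 1 - Real.log t)
      linarith
    have h2 : t * Real.exp (v - 1 - Real.log t) = Real.exp (v - 1) := by
      nth_rewrite 1 [← Real.exp_log h]
      rw [← Real.exp_add]
      congr 1
      ring
    nlinarith [mul_le_mul_of_nonneg_left h1 ht]

lemma sub_one_le_mul_log (t : ℝ) (ht : 0 ≤ t) : t - 1 ≤ t * Real.log t := by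
  rcases eq_or_lt_of_le ht with h | h
  · simp [← h]
  · have := Real.log_le_sub_one_of_pos (inv_pos.mpr h)
    rw [Real.log_inv] at this
    have h2 : -Real.log t ≤ t⁻¹ - 1 := this
    nlinarith [mul_le_mul_of_nonneg_left h2 ht, mul_inv_cancel₀ h.ne']

lemma abs_mul_log_le (t A : ℝ) (ht : 0 ≤ t) (htA : t ≤ A) (hA : 1 ≤ A) :
    |t * Real.log t| ≤ A * Real.log A + 1 := by
  have hAlog : 0 ≤ A * Real.log A := by
    have := Real.log_nonneg hA
    positivity
  rw [abs_le]
  constructor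
  · nlinarith [sub_one_le_mul_log t ht]
  · rcases le_or_gt t 1 with h1 | h1
    · have : t * Real.log t ≤ 0 :=
        mul_nonpos_of_nonneg_of_nonpos ht (Real.log_nonpos ht h1)
      linarith
    · have hlt : Real.log t ≤ Real.log A := Real.log_le_log (by linarith) htA
      have : t * Real.log t ≤ A * Real.log A := by
        nlinarith [Real.log_nonneg h1.le]
      linarith

lemma integrable_of_bdd {Ω : Type*} [MeasurableSpace Ω] {μ : Measure Ω} [IsFiniteMeasure μ]
    {f : Ω → ℝ} (hf : Measurable f) {C : ℝ} (h : ∀ x, |f x| ≤ C) : Integrable f μ :=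
  Integrable.mono' (integrable_const C) hf.aestronglyMeasurable
    (Filter.Eventually.of_forall fun x => by rw [Real.norm_eq_abs]; exact h x)


/-- **NWJ (Nguyen–Wainwright–Jordan) representation of the skew KL divergence.**
For probability measures `P, Q` on a standard Borel space and `α ∈ (0,1)`,
`D_KL(P ‖ αP + (1-α)Q) = ∫ log (dP/d(αP+(1-α)Q)) dP` is the least upper bound of
`∫ f dP - α ∫ e^(f-1) dP - (1-α) ∫ e^(f-1) dQ` over all bounded measurable
functions `f`; in particular every such `f` gives a lower bound. -/
theorem skew_kl_nwj
    {Ω : Type*} [MeasurableSpace Ω] [StandardBorelSpace Ω]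
    (P Q : Measure Ω) [IsProbabilityMeasure P] [IsProbabilityMeasure Q]
    (α : ℝ) (hα : α ∈ Set.Ioo (0 : ℝ) 1) :
    IsLUB
      {r : ℝ | ∃ f : Ω → ℝ, Measurable f ∧ (∃ C : ℝ, ∀ x, |f x| ≤ C) ∧
        r = (∫ x, f x ∂P)
          - α * ∫ x, Real.exp (f x - 1) ∂P
          - (1 - α) * ∫ x, Real.exp (f x - 1) ∂Q}
      (∫ x, Real.log ((P.rnDeriv (mixture α P Q) x).toReal) ∂P) := by
  obtain ⟨hα0, hα1⟩ := hα
  have h1α : (0:ℝ) < 1 - α := by linarith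
  set M : Measure Ω := mixture α P Q with hM
  have hαne : ENNReal.ofReal α ≠ 0 := by
    simp only [ne_eq, ENNReal.ofReal_eq_zero, not_le]; exact hα0
  have h1αne : ENNReal.ofReal (1 - α) ≠ 0 := by
    simp only [ne_eq, ENNReal.ofReal_eq_zero, not_le]; exact h1α
  haveI : IsProbabilityMeasure M := by
    constructor
    simp only [hM, mixture, Measure.add_apply, Measure.smul_apply, smul_eq_mul,
      measure_univ, mul_one]
    rw [← ENNReal.ofReal_add hα0.le h1α.le]
    norm_num
  have hPM : P ≪ M := by
    refine Measure.AbsolutelyContinuous.mk fun s hs h0 => ?_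
    have h0' : ENNReal.ofReal α * P s = 0 ∧ ENNReal.ofReal (1 - α) * Q s = 0 := by
      rw [← add_eq_zero]
      simpa [hM, mixture, Measure.add_apply, Measure.smul_apply, smul_eq_mul] using h0
    rcases mul_eq_zero.mp h0'.1 with h | h
    · exact absurd h hαne
    · exact h
  set ρ : Ω → ℝ := fun x => (P.rnDeriv M x).toReal with hρ
  have hρmeas : Measurable ρ := (Measure.measurable_rnDeriv P M).ennreal_toReal
  have hρnonneg : ∀ x, 0 ≤ ρ x := fun x => ENNReal.toReal_nonneg
  set A : ℝ := α⁻¹ with hA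
  have hA1 : 1 ≤ A := (one_le_inv_iff₀).mpr ⟨hα0, hα1.le⟩
  have hlogA : 0 ≤ Real.log A := Real.log_nonneg hA1
  -- a.e. bound ρ ≤ A w.r.t. M
  have hbM : ∀ᵐ x ∂M, ρ x ≤ A := by
    have hsmul_le : ENNReal.ofReal α • P ≤ M := by
      rw [hM]; exact Measure.le_add_right le_rfl
    have hd1 : (ENNReal.ofReal α • P).rnDeriv M ≤ᵐ[M] 1 :=
      Measure.rnDeriv_le_one_of_le hsmul_le
    have hd2 : (ENNReal.ofReal α • P).rnDeriv M =ᵐ[M]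
        ENNReal.ofReal α • P.rnDeriv M :=
      Measure.rnDeriv_smul_left_of_ne_top P M ENNReal.ofReal_ne_top
    filter_upwards [hd1, hd2] with x h1 h2
    rw [h2] at h1
    have hx : P.rnDeriv M x ≤ (ENNReal.ofReal α)⁻¹ := by
      rw [ENNReal.le_inv_iff_mul_le, mul_comm]
      exact h1
    have hne : (ENNReal.ofReal α)⁻¹ ≠ ⊤ := ENNReal.inv_ne_top.mpr hαne
    calc ρ x ≤ ((ENNReal.ofReal α)⁻¹).toReal := ENNReal.toReal_mono hne hx
      _ = A := by rw [ENNReal.toReal_inv, ENNReal.toReal_ofReal hα0.le]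
  have hbP : ∀ᵐ x ∂P, ρ x ≤ A := hPM.ae_le hbM
  have hρposP : ∀ᵐ x ∂P, 0 < ρ x := by
    filter_upwards [Measure.rnDeriv_pos hPM, hPM.ae_le (Measure.rnDeriv_lt_top P M)]
      with x h1 h2
    exact ENNReal.toReal_pos h1.ne' h2.ne
  set L : Ω → ℝ := fun x => Real.log (ρ x) with hL
  have hLmeas : Measurable L := Real.measurable_log.comp hρmeas
  -- integrability of ρ log ρ w.r.t. M and of L w.r.t. P
  have hint_rho_logrho : Integrable (fun x => ρ x * L x) M := by
    refine Integrable.mono' (integrable_const (A * Real.log A + 1))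
      ((hρmeas.mul hLmeas).aestronglyMeasurable) ?_
    filter_upwards [hbM] with x hx
    rw [Real.norm_eq_abs]
    exact abs_mul_log_le _ _ (hρnonneg x) hx hA1
  have hintL : Integrable L P := by
    refine (integrable_rnDeriv_smul_iff hPM).mp ?_
    simpa [smul_eq_mul] using hint_rho_logrho
  have htarget : ∫ x, ρ x * L x ∂M = ∫ x, L x ∂P := by
    have := integral_rnDeriv_smul hPM (f := L)
    simpa [smul_eq_mul] using this
  have hint_rho_int : Integrable ρ M := Measure.integrable_toReal_rnDeriv
  have hint_rho : ∫ x, ρ x ∂M = 1 := by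
    rw [hρ, Measure.integral_toReal_rnDeriv hPM]
    simp
  -- mixture splitting
  have hmix : ∀ g : Ω → ℝ, Integrable g P → Integrable g Q →
      α * ∫ x, g x ∂P + (1 - α) * ∫ x, g x ∂Q = ∫ x, g x ∂M := by
    intro g hgP hgQ
    rw [hM]
    show _ = ∫ x, g x ∂(ENNReal.ofReal α • P + ENNReal.ofReal (1 - α) • Q)
    rw [integral_add_measure
        ((integrable_smul_measure hαne ENNReal.ofReal_ne_top).mpr hgP)
        ((integrable_smul_measure h1αne ENNReal.ofReal_ne_top).mpr hgQ),
      integral_smul_measure, integral_smul_measure,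
      ENNReal.toReal_ofReal hα0.le, ENNReal.toReal_ofReal h1α.le,
      smul_eq_mul, smul_eq_mul]
  constructor
  · -- upper bound
    rintro r ⟨f, hfmeas, ⟨C, hC⟩, rfl⟩
    have hfP : Integrable f P := integrable_of_bdd hfmeas hC
    have hemeas : Measurable fun x => Real.exp (f x - 1) :=
      (Real.measurable_exp.comp (hfmeas.sub measurable_const))
    have heC : ∀ x, |Real.exp (f x - 1)| ≤ Real.exp C := by
      intro x
      rw [abs_of_pos (Real.exp_pos _)]
      exact Real.exp_le_exp.mpr (by have := (abs_le.mp (hC x)).2; linarith)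
    have heP : Integrable (fun x => Real.exp (f x - 1)) P := integrable_of_bdd hemeas heC
    have heQ : Integrable (fun x => Real.exp (f x - 1)) Q := integrable_of_bdd hemeas heC
    have hsplit : α * ∫ x, Real.exp (f x - 1) ∂P + (1 - α) * ∫ x, Real.exp (f x - 1) ∂Q
        = ∫ x, Real.exp (f x - 1) ∂M := hmix _ heP heQ
    have hfM : ∫ x, f x ∂P = ∫ x, ρ x * f x ∂M := by
      have := integral_rnDeriv_smul hPM (f := f)
      simp only [smul_eq_mul] at this
      exact this.symm
    have hintfM : Integrable (fun x => ρ x * f x) M := by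
      have := (integrable_rnDeriv_smul_iff hPM (f := f)).mpr hfP
      simpa [smul_eq_mul] using this
    have hinteM : Integrable (fun x => Real.exp (f x - 1)) M := integrable_of_bdd hemeas heC
    have key : ∫ x, (ρ x * f x - Real.exp (f x - 1)) ∂M ≤ ∫ x, ρ x * L x ∂M := by
      refine integral_mono_ae (hintfM.sub hinteM) hint_rho_logrho ?_
      exact Filter.Eventually.of_forall fun x => nwj_pointwise (ρ x) (f x) (hρnonneg x)
    rw [integral_sub hintfM hinteM] at key
    have : (∫ x, f x ∂P) - α * ∫ x, Real.exp (f x - 1) ∂P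
        - (1 - α) * ∫ x, Real.exp (f x - 1) ∂Q
        = ∫ x, ρ x * f x ∂M - ∫ x, Real.exp (f x - 1) ∂M := by
      rw [← hsplit, ← hfM]; ring
    rw [this]
    calc ∫ x, ρ x * f x ∂M - ∫ x, Real.exp (f x - 1) ∂M ≤ ∫ x, ρ x * L x ∂M := key
      _ = ∫ x, L x ∂P := htarget
  · -- least upper bound
    intro b hb
    refine le_of_forall_pos_le_add fun ε hε => ?_
    obtain ⟨n, hn⟩ := exists_nat_one_div_lt hε
    set c : ℝ := Real.exp (-(n : ℝ)) with hc
    have hc0 : 0 < c := Real.exp_pos _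
    have hc1 : c ≤ 1 := Real.exp_le_one_iff.mpr (neg_nonpos.mpr (Nat.cast_nonneg n))
    have hcε : c < ε := by
      have h1 : (n : ℝ) + 1 ≤ Real.exp (n : ℝ) := Real.add_one_le_exp (n : ℝ)
      have h2 : c ≤ ((n : ℝ) + 1)⁻¹ := by
        rw [hc, Real.exp_neg]
        exact inv_anti₀ (by positivity) h1
      calc c ≤ ((n : ℝ) + 1)⁻¹ := h2
        _ = 1 / ((n : ℝ) + 1) := (one_div _).symm
        _ < ε := hn
    set g : Ω → ℝ := fun x => min (max (ρ x) c) A with hg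
    have hgmeas : Measurable g := (hρmeas.max measurable_const).min measurable_const
    have hglb : ∀ x, c ≤ g x := fun x =>
      le_min (le_max_right _ _) (le_trans hc1 hA1)
    have hgub : ∀ x, g x ≤ A := fun x => min_le_right _ _
    have hgpos : ∀ x, 0 < g x := fun x => lt_of_lt_of_le hc0 (hglb x)
    set fn : Ω → ℝ := fun x => 1 + Real.log (g x) with hfn
    have hfnmeas : Measurable fn := measurable_const.add (Real.measurable_log.comp hgmeas)
    have hfnbdd : ∀ x, |fn x| ≤ 1 + (n : ℝ) + Real.log A := by
      intro x
      have hlb : -(n : ℝ) ≤ Real.log (g x) := by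
        calc -(n : ℝ) = Real.log c := (Real.log_exp _).symm
          _ ≤ Real.log (g x) := Real.log_le_log hc0 (hglb x)
      have hub : Real.log (g x) ≤ Real.log A :=
        Real.log_le_log (hgpos x) (hgub x)
      have hfx : fn x = 1 + Real.log (g x) := rfl
      rw [abs_le, hfx]
      have hn0 : (0:ℝ) ≤ (n:ℝ) := Nat.cast_nonneg n
      constructor <;> linarith
    have hexp_eq : ∀ x, Real.exp (fn x - 1) = g x := by
      intro x
      rw [hfn]
      simp only [add_sub_cancel_left]
      exact Real.exp_log (hgpos x)
    have hfnP : Integrable fn P := integrable_of_bdd hfnmeas hfnbdd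
    have hgP : Integrable g P := by
      refine integrable_of_bdd hgmeas (C := A) fun x => ?_
      rw [abs_of_pos (hgpos x)]; exact hgub x
    have hgQ : Integrable g Q := by
      refine integrable_of_bdd hgmeas (C := A) fun x => ?_
      rw [abs_of_pos (hgpos x)]; exact hgub x
    have hgM : Integrable g M := by
      refine integrable_of_bdd hgmeas (C := A) fun x => ?_
      rw [abs_of_pos (hgpos x)]; exact hgub x
    -- the value for fn is in the set, hence ≤ b
    have hmem : (∫ x, fn x ∂P) - α * ∫ x, Real.exp (fn x - 1) ∂P
        - (1 - α) * ∫ x, Real.exp (fn x - 1) ∂Q ∈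
        {r : ℝ | ∃ f : Ω → ℝ, Measurable f ∧ (∃ C : ℝ, ∀ x, |f x| ≤ C) ∧
          r = (∫ x, f x ∂P) - α * ∫ x, Real.exp (f x - 1) ∂P
            - (1 - α) * ∫ x, Real.exp (f x - 1) ∂Q} :=
      ⟨fn, hfnmeas, ⟨1 + (n : ℝ) + Real.log A, hfnbdd⟩, rfl⟩
    have hrb := hb hmem
    -- rewrite the value
    have hval : (∫ x, fn x ∂P) - α * ∫ x, Real.exp (fn x - 1) ∂P
        - (1 - α) * ∫ x, Real.exp (fn x - 1) ∂Q
        = (∫ x, fn x ∂P) - ∫ x, g x ∂M := by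
      have hsplit := hmix g hgP hgQ
      simp only [hexp_eq]
      rw [← hsplit]; ring
    rw [hval] at hrb
    -- lower bound for ∫ fn dP
    have hfn_ge : 1 + ∫ x, L x ∂P ≤ ∫ x, fn x ∂P := by
      have : ∫ x, (1 + L x) ∂P ≤ ∫ x, fn x ∂P := by
        refine integral_mono_ae ((integrable_const 1).add hintL) hfnP ?_
        filter_upwards [hρposP, hbP] with x hx1 hx2
        have : ρ x ≤ g x := le_min (le_max_left _ _) hx2
        exact (add_le_add_iff_left 1).mpr (Real.log_le_log hx1 this)
      rwa [integral_add (integrable_const 1) hintL, integral_const, probReal_univ,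
        smul_eq_mul, mul_one] at this
    -- upper bound for ∫ g dM
    have hg_le : ∫ x, g x ∂M ≤ 1 + c := by
      have hpt : ∀ x, g x ≤ ρ x + c := fun x =>
        le_trans (min_le_left _ _) (max_le (by linarith [hc0.le]) (by linarith [hρnonneg x]))
      calc ∫ x, g x ∂M ≤ ∫ x, (ρ x + c) ∂M :=
            integral_mono hgM (hint_rho_int.add (integrable_const c)) hpt
        _ = 1 + c := by
            rw [integral_add hint_rho_int (integrable_const c), hint_rho, integral_const,
              probReal_univ, smul_eq_mul, one_mul]
    have : ∫ x, L x ∂P - c ≤ (∫ x, fn x ∂P) - ∫ x, g x ∂M := by linarith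
    linarith
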